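/- Let Λ ⊂ ℕ₀^d be a finite downward closed multi-index set and for ν ∈ Λ let I^ν be the tensorized interpolation operator exact on polynomials of componentwise degree ≤ ν. Define the Smolyak operator I^Λ = Σ_{ν∈Λ} ζ_{Λ,ν} I^ν with ζ_{Λ,ν} = Σ_{e∈{0,1}^d, ν+e∈Λ} (−1)^{|e|}. Then I^Λ[p] = p for every polynomial p in P_Λ = span{c ↦ c^μ : μ ∈ Λ}. -/
import Mathlib


/-- exactness of the Smolyak combination formula: Let `Λ` be a
finite downward closed multi-index set, `J n` univariate interpolation
operators exact on polynomials of degree `≤ n`, and `I ν` their linear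
tensorizations. Then the Smolyak operator `I^Λ = Σ_{ν∈Λ} ζ_{Λ,ν} I^ν`, with
`ζ_{Λ,ν} = Σ_{e∈{0,1}^d, ν+e∈Λ} (-1)^{|e|}`, reproduces every polynomial in
`P_Λ = span{c ↦ c^μ : μ ∈ Λ}`. -/
theorem stmt10 (d : ℕ) (Λ : Finset (Fin d → ℕ))
    (hdc : ∀ ν ∈ Λ, ∀ μ : Fin d → ℕ, μ ≤ ν → μ ∈ Λ)
    (J : ℕ → (ℝ → ℝ) → (ℝ → ℝ))
    (hJexact : ∀ n (f : ℝ → ℝ),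
      (∃ q : Polynomial ℝ, q.natDegree ≤ n ∧ ∀ t, f t = q.eval t) → J n f = f)
    (I : (Fin d → ℕ) → ((Fin d → ℝ) → ℝ) → ((Fin d → ℝ) → ℝ))
    (hlin : ∀ ν, IsLinearMap ℝ (I ν))
    (htensor : ∀ ν μ : Fin d → ℕ,
      I ν (fun c => ∏ j, c j ^ μ j)
        = fun c => ∏ j, J (ν j) (fun t => t ^ μ j) (c j))
    (ζ : (Fin d → ℕ) → ℝ)
    (hζ : ∀ ν, ζ ν = ∑ e ∈ Finset.univ.filter
        (fun e : Fin d → Fin 2 => (fun j => ν j + (e j : ℕ)) ∈ Λ),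
      (-1 : ℝ) ^ (∑ j, (e j : ℕ))) :
    ∀ p : (Fin d → ℝ) → ℝ,
      p ∈ Submodule.span ℝ
        {f : (Fin d → ℝ) → ℝ | ∃ μ ∈ Λ, f = fun c => ∏ j, c j ^ μ j} →
      (fun c => ∑ ν ∈ Λ, ζ ν * I ν p c) = p := by

  classical
  -- univariate exactness on monomials
  have hg : ∀ m n : ℕ, m ≤ n → J n (fun t => t ^ m) = fun t => t ^ m := by
    intro m n hmn
    apply hJexact
    refine ⟨Polynomial.X ^ m, ?_, fun t => by simp⟩
    simpa using hmn
  -- telescoping sum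
  have htel : ∀ (h : ℕ → ℝ) (m : ℕ),
      ∑ n ∈ Finset.range (m + 1), (h n - if n = 0 then 0 else h (n - 1)) = h m := by
    intro h m
    induction m with
    | zero => simp
    | succ k ih =>
        rw [Finset.sum_range_succ, ih]
        simp
  -- the monomial case
  have hmono : ∀ μ ∈ Λ,
      (fun c => ∑ ν ∈ Λ, ζ ν * I ν (fun c => ∏ j, c j ^ μ j) c)
        = fun c => ∏ j, c j ^ μ j := by
    intro μ hμ
    funext c
    simp only [htensor]
    set g : Fin d → ℕ → ℝ := fun j n => J n (fun t => t ^ μ j) (c j) with hgdef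
    have hgval : ∀ j n, μ j ≤ n → g j n = c j ^ μ j := by
      intro j n h
      simp only [hgdef, hg (μ j) n h]
    set D : Fin d → ℕ → ℝ := fun j n => g j n - (if n = 0 then 0 else g j (n - 1))
      with hDdef
    have hDzero : ∀ (j : Fin d) (n : ℕ), μ j + 1 ≤ n → D j n = 0 := by
      intro j n hn
      have h1 : μ j ≤ n := le_trans (Nat.le_succ _) hn
      have h2 : μ j ≤ n - 1 := by omega
      have h3 : n ≠ 0 := by omega
      simp [hDdef, h3, hgval j n h1, hgval j (n - 1) h2]
    calc ∑ ν ∈ Λ, ζ ν * ∏ j, g j (ν j)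
        = ∑ ν ∈ Λ, ∑ e ∈ Finset.univ.filter
            (fun e : Fin d → Fin 2 => (fun j => ν j + (e j : ℕ)) ∈ Λ),
            (-1 : ℝ) ^ (∑ j, (e j : ℕ)) * ∏ j, g j (ν j) := by
          refine Finset.sum_congr rfl fun ν _ => ?_
          rw [hζ, Finset.sum_mul]
      _ = ∑ l ∈ Λ, ∑ e ∈ Finset.univ.filter
            (fun e : Fin d → Fin 2 => ∀ j, (e j : ℕ) ≤ l j),
            (-1 : ℝ) ^ (∑ j, (e j : ℕ)) * ∏ j, g j (l j - (e j : ℕ)) := by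
          rw [Finset.sum_sigma', Finset.sum_sigma']
          refine Finset.sum_nbij'
            (fun a => ⟨fun j => a.1 j + (a.2 j : ℕ), a.2⟩)
            (fun b => ⟨fun j => b.1 j - (b.2 j : ℕ), b.2⟩)
            ?_ ?_ ?_ ?_ ?_
          · rintro ⟨ν, e⟩ ha
            simp only [Finset.mem_sigma, Finset.mem_filter, Finset.mem_univ,
              true_and] at ha ⊢
            exact ⟨ha.2, fun j => Nat.le_add_left _ _⟩
          · rintro ⟨l, e⟩ hb
            simp only [Finset.mem_sigma, Finset.mem_filter, Finset.mem_univ,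
              true_and] at hb ⊢
            constructor
            · exact hdc l hb.1 _ (fun j => Nat.sub_le _ _)
            · have : (fun j => l j - (e j : ℕ) + (e j : ℕ)) = l := by
                funext j; exact Nat.sub_add_cancel (hb.2 j)
              rw [this]; exact hb.1
          · rintro ⟨ν, e⟩ _
            simp only [Sigma.mk.inj_iff, heq_eq_eq, and_true]
            funext j; omega
          · rintro ⟨l, e⟩ hb
            simp only [Finset.mem_sigma, Finset.mem_filter, Finset.mem_univ,
              true_and] at hb
            simp only [Sigma.mk.inj_iff, heq_eq_eq, and_true]
            funext j; exact Nat.sub_add_cancel (hb.2 j)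
          · rintro ⟨ν, e⟩ _
            simp only
            congr 1
            refine Finset.prod_congr rfl fun j _ => ?_
            rw [Nat.add_sub_cancel]
      _ = ∑ l ∈ Λ, ∏ j, D j (l j) := by
          refine Finset.sum_congr rfl fun l _ => ?_
          have hF : ∀ e : Fin d → Fin 2,
              (∏ j, (if ((e j : ℕ)) ≤ l j then
                  (-1 : ℝ) ^ ((e j : ℕ)) * g j (l j - (e j : ℕ)) else 0))
                = if (∀ j, (e j : ℕ) ≤ l j) then
                    (-1 : ℝ) ^ (∑ j, (e j : ℕ)) * ∏ j, g j (l j - (e j : ℕ))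
                  else 0 := by
            intro e
            by_cases he : ∀ j, (e j : ℕ) ≤ l j
            · rw [if_pos he,
                show (∏ j, (if ((e j : ℕ)) ≤ l j then
                    (-1 : ℝ) ^ ((e j : ℕ)) * g j (l j - (e j : ℕ)) else 0))
                  = ∏ j, (-1 : ℝ) ^ ((e j : ℕ)) * g j (l j - (e j : ℕ)) from
                  Finset.prod_congr rfl fun j _ => if_pos (he j),
                Finset.prod_mul_distrib, Finset.prod_pow_eq_pow_sum]
            · push_neg at he
              obtain ⟨j, hj⟩ := he
              rw [if_neg (by push_neg; exact ⟨j, hj⟩)]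
              exact Finset.prod_eq_zero (Finset.mem_univ j) (by rw [if_neg (not_le.mpr hj)])
          rw [Finset.sum_filter]
          have : ∑ e : Fin d → Fin 2,
              (if (∀ j, (e j : ℕ) ≤ l j) then
                (-1 : ℝ) ^ (∑ j, (e j : ℕ)) * ∏ j, g j (l j - (e j : ℕ)) else 0)
              = ∑ e : Fin d → Fin 2, ∏ j, (if ((e j : ℕ)) ≤ l j then
                  (-1 : ℝ) ^ ((e j : ℕ)) * g j (l j - (e j : ℕ)) else 0) := by
            exact Finset.sum_congr rfl fun e _ => (hF e).symm
          rw [this,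
            show (∑ e : Fin d → Fin 2, ∏ j, (if ((e j : ℕ)) ≤ l j then
                (-1 : ℝ) ^ ((e j : ℕ)) * g j (l j - (e j : ℕ)) else 0))
              = ∏ j, ∑ x : Fin 2, (if ((x : ℕ)) ≤ l j then
                (-1 : ℝ) ^ ((x : ℕ)) * g j (l j - (x : ℕ)) else 0) from
              (Fintype.prod_sum fun (j : Fin d) (x : Fin 2) => (if ((x : ℕ)) ≤ l j then
                (-1 : ℝ) ^ ((x : ℕ)) * g j (l j - (x : ℕ)) else 0)).symm]
          refine Finset.prod_congr rfl fun j _ => ?_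
          rw [Fin.sum_univ_two]
          rw [show ((0 : Fin 2) : ℕ) = 0 from rfl, show ((1 : Fin 2) : ℕ) = 1 from rfl,
            if_pos (Nat.zero_le _)]
          simp only [pow_zero, pow_one, one_mul, Nat.sub_zero, hDdef]
          rcases Nat.eq_zero_or_pos (l j) with h0 | h0
          · rw [h0]; simp
          · rw [if_pos (show 1 ≤ l j by omega), if_neg (show ¬ l j = 0 by omega)]
            ring
      _ = ∑ l ∈ Fintype.piFinset (fun j => Finset.range (μ j + 1)), ∏ j, D j (l j) := by
          refine (Finset.sum_subset ?_ ?_).symm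
          · intro l hl
            rw [Fintype.mem_piFinset] at hl
            refine hdc μ hμ l ?_
            intro j
            have := hl j
            rw [Finset.mem_range] at this
            show l j ≤ μ j
            omega
          · intro l hlΛ hlbox
            rw [Fintype.mem_piFinset] at hlbox
            push_neg at hlbox
            obtain ⟨j, hj⟩ := hlbox
            rw [Finset.mem_range] at hj
            exact Finset.prod_eq_zero (Finset.mem_univ j) (hDzero j (l j) (by omega))
      _ = ∏ j, ∑ n ∈ Finset.range (μ j + 1), D j n :=
          (Finset.prod_univ_sum _ _).symm
      _ = ∏ j, c j ^ μ j := by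
          refine Finset.prod_congr rfl fun j _ => ?_
          rw [hDdef]
          rw [htel (g j) (μ j)]
          exact hgval j (μ j) le_rfl
  -- conclude by span induction
  intro p hp
  induction hp using Submodule.span_induction with
  | mem f hf =>
      obtain ⟨μ, hμ, rfl⟩ := hf
      exact hmono μ hμ
  | zero =>
      funext c
      have hz : ∀ ν : Fin d → ℕ, I ν 0 = 0 := fun ν => (hlin ν).map_zero
      simp [hz]
  | add f f' hf hf' ihf ihf' =>
      funext c
      have h1 := congrFun ihf c
      have h2 := congrFun ihf' c
      have hadd : ∀ ν : Fin d → ℕ, I ν (f + f') = I ν f + I ν f' :=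
        fun ν => (hlin ν).map_add f f'
      simp only [hadd, Pi.add_apply, mul_add, Finset.sum_add_distrib, h1, h2]
  | smul r f hf ihf =>
      funext c
      have h1 := congrFun ihf c
      have hs : ∀ ν : Fin d → ℕ, I ν (r • f) = r • I ν f :=
        fun ν => (hlin ν).map_smul r f
      simp only [hs, Pi.smul_apply, smul_eq_mul]
      rw [← h1, Finset.mul_sum]
      exact Finset.sum_congr rfl fun ν _ => by ring
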